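/- Let G be an (n, d, c√d) algebraic expander with c ≥ 1 and d sufficiently large, and suppose pd ≥ 5c√d. Consider the deletion process: remove S₀ (vertices of G_p-degree outside [4pd/5, 6pd/5]), then iteratively remove any vertex of current degree < 3pd/5. If |S₀| ≤ e^{−c√d/12}·n, then the total number of vertices removed in the iterative phase is at most 2|S₀|; hence |OUT| ≤ 3e^{−c√d/12}·n. -/

import Mathlib

open Finset
open scoped Classical

/-- Spectral bound: the second largest eigenvalue of `G` in absolute value is at most `lam`. -/
def specBound {V : Type} [Fintype V] (G : SimpleGraph V) [DecidableRel G.Adj] (lam : ℝ) : Prop :=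
  ∀ x : V → ℝ, (∑ v, x v) = 0 →
    |∑ u, ∑ v, (if G.Adj u v then x u * x v else 0)| ≤ lam * ∑ v, (x v) ^ 2

/-- One step of the deletion process: keep only the vertices of `A` having at least `θ`
neighbors (in `Gp`) inside `A`. -/
noncomputable def peel {V : Type} [Fintype V] (Gp : SimpleGraph V) [DecidableRel Gp.Adj]
    (θ : ℝ) (A : Finset V) : Finset V :=
  A.filter fun v => θ ≤ ((A.filter fun u => Gp.Adj v u).card : ℝ)

/-
A vertex removed in the iterative phase had `G_p`-degree at least `4pd/5` but fewer than `3pd/5`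
neighbours among the surviving vertices, so it sends at least `pd/5 ≥ c√d` edges to the vertices
removed before it. Hence every set `U` lying between two consecutive stages of the removed set
spans at least `2 · (pd/5) · (|U| - |S₀|)` ordered edges. If more than `3|S₀|` vertices were ever
removed, some such `U` has exactly `3|S₀| + 1` vertices, and the expander mixing lemma
`e(U) ≤ d|U|²/n + c√d|U|` contradicts this once `|S₀| ≤ e^{-c√d/12} n` and `d` is large.
-/

open Matrix

namespace SimpleGraph

variable {V : Type*} (G : SimpleGraph V) [DecidableRel G.Adj]

lemma card_interedges_eq_sum (s t : Finset V) :
    #(G.interedges s t) = ∑ x ∈ s, #{y ∈ t | G.Adj x y} := by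
  rw [interedges_def, card_filter, sum_product]
  simp only [card_filter]

lemma card_interedges_mono {H : SimpleGraph V} [DecidableRel H.Adj] (h : G ≤ H)
    (s t : Finset V) : #(G.interedges s t) ≤ #(H.interedges s t) :=
  card_le_card fun e he => by
    rw [mem_interedges_iff] at he ⊢
    exact ⟨he.1, he.2.1, h he.2.2⟩

lemma card_interedges_add_two_mul_card_le_union [DecidableEq V] {C T : Finset V}
    (hCT : Disjoint C T) {m : ℝ} (hT : ∀ t ∈ T, m ≤ #{u ∈ C | G.Adj t u}) :
    #(G.interedges C C) + 2 * m * #T ≤ (#(G.interedges (C ∪ T) (C ∪ T)) : ℝ) := by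
  have hsub : G.interedges C C ∪ G.interedges C T ∪ G.interedges T C ⊆
      G.interedges (C ∪ T) (C ∪ T) :=
    union_subset (union_subset (interedges_mono G subset_union_left subset_union_left)
      (interedges_mono G subset_union_left subset_union_right))
      (interedges_mono G subset_union_right subset_union_left)
  have hdisj (s t : Finset V) : Disjoint (G.interedges C s) (G.interedges T t) :=
    Finset.disjoint_left.2 fun _ h₁ h₂ =>
      Finset.disjoint_left.1 hCT (G.mem_interedges_iff.1 h₁).1 (G.mem_interedges_iff.1 h₂).1
  have hcomm : #(G.interedges C T) = #(G.interedges T C) :=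
    @Rel.card_interedges_comm _ _ _ G.symm C T
  have hle := card_le_card hsub
  rw [card_union_of_disjoint (disjoint_union_left.2 ⟨hdisj _ _, hdisj _ _⟩),
    card_union_of_disjoint (G.interedges_disjoint_right _ hCT)] at hle
  have hle' : (#(G.interedges C C) : ℝ) + 2 * #(G.interedges T C) ≤
      #(G.interedges (C ∪ T) (C ∪ T)) := by
    exact_mod_cast (by omega : #(G.interedges C C) + 2 * #(G.interedges T C) ≤ _)
  have hTC : m * #T ≤ #(G.interedges T C) := by
    rw [card_interedges_eq_sum, mul_comm, ← nsmul_eq_mul, ← sum_const, Nat.cast_sum]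
    exact sum_le_sum hT
  linarith

variable [Fintype V]

lemma dotProduct_adjMatrix_mulVec_sub_const {α : Type*} [CommRing α] {d : ℕ}
    (hreg : G.IsRegularOfDegree d) (f : V → α) (a : α) :
    (f - a • 1) ⬝ᵥ G.adjMatrix α *ᵥ (f - a • 1) =
      f ⬝ᵥ G.adjMatrix α *ᵥ f - 2 * a * d * ∑ v, f v + a ^ 2 * d * Fintype.card V := by
  have hA : G.adjMatrix α *ᵥ 1 = (d : α) • 1 := funext fun v => by
    simpa using adjMatrix_mulVec_const_apply_of_regular (α := α) hreg (a := 1) (v := v)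
  have hA' : 1 ᵥ* G.adjMatrix α = (d : α) • 1 := by
    rw [← mulVec_transpose, transpose_adjMatrix, hA]
  simp only [mulVec_sub, mulVec_smul, dotProduct_sub, sub_dotProduct, smul_dotProduct,
    dotProduct_smul, hA, dotProduct_mulVec 1, hA', dotProduct_one, one_dotProduct, smul_eq_mul,
    Pi.sub_apply, Pi.smul_apply, Pi.one_apply, mul_one, sum_sub_distrib, sum_const, card_univ,
    nsmul_eq_mul]
  ring

lemma dotProduct_adjMatrix_mulVec_indicator {α : Type*} [Semiring α] (W : Finset V) :
    (fun v => if v ∈ W then (1 : α) else 0) ⬝ᵥ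
      G.adjMatrix α *ᵥ (fun v => if v ∈ W then (1 : α) else 0) = (#(G.interedges W W) : α) := by
  rw [dotProduct_mulVec_adjMatrix, card_interedges_eq_sum]
  simp only [card_filter, Nat.cast_sum, Nat.cast_ite, Nat.cast_one, Nat.cast_zero]
  rw [← Fintype.sum_ite_mem W]
  refine sum_congr rfl fun i _ => ?_
  by_cases hi : i ∈ W
  · simp only [hi, if_true, one_mul]
    rw [← Fintype.sum_ite_mem W]
    refine sum_congr rfl fun j _ => ?_
    by_cases hj : j ∈ W <;> simp [hj]
  · simp [hi]

end SimpleGraph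

lemma SimpleGraph.card_interedges_self_le_of_specBound {V : Type} [Fintype V] (G : SimpleGraph V)
    [DecidableRel G.Adj] {d : ℕ} {lam : ℝ} (hreg : G.IsRegularOfDegree d) (hlam : 0 ≤ lam)
    (hspec : specBound G lam) (W : Finset V) :
    (#(G.interedges W W) : ℝ) ≤ d * #W ^ 2 / Fintype.card V + lam * #W := by
  set n : ℝ := (Fintype.card V : ℝ)
  set w : ℝ := (#W : ℝ)
  set f : V → ℝ := fun v => if v ∈ W then 1 else 0
  have hfsum : ∑ v, f v = w := by simp [f, w]
  rcases (Fintype.card V).eq_zero_or_pos with h0 | hpos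
  · have : IsEmpty V := Fintype.card_eq_zero_iff.1 h0
    simp only [eq_empty_of_isEmpty W, interedges_empty_left, card_empty, Nat.cast_zero]
    exact add_nonneg (by positivity) (mul_nonneg hlam (by positivity))
  have hn : 0 < n := by positivity
  set x : V → ℝ := f - (w / n) • 1
  have hx : ∑ v, x v = 0 := by
    simp only [x, Pi.sub_apply, Pi.smul_apply, Pi.one_apply, smul_eq_mul, mul_one,
      sum_sub_distrib, hfsum, sum_const, card_univ, nsmul_eq_mul]
    field_simp
    ring
  have hxsq : ∑ v, x v ^ 2 ≤ w := by
    have hpt : ∀ v, x v ^ 2 = (1 - 2 * (w / n)) * f v + (w / n) ^ 2 := fun v => by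
      by_cases hv : v ∈ W <;>
        simp only [x, f, hv, Pi.sub_apply, Pi.smul_apply, Pi.one_apply, smul_eq_mul, mul_one,
          if_true, if_false] <;> ring
    simp only [hpt, sum_add_distrib, ← mul_sum, hfsum, sum_const, card_univ, nsmul_eq_mul]
    have : (n : ℝ) * (w / n) ^ 2 = w * (w / n) := by field_simp
    nlinarith [div_nonneg (Nat.cast_nonneg #W) hn.le]
  have hform := hspec x hx
  rw [← dotProduct_mulVec_adjMatrix, dotProduct_adjMatrix_mulVec_sub_const G hreg,
    dotProduct_adjMatrix_mulVec_indicator, hfsum] at hform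
  have : ((#(G.interedges W W) : ℝ) - 2 * (w / n) * d * w + (w / n) ^ 2 * d * n) =
      #(G.interedges W W) - d * w ^ 2 / n := by
    field_simp
    ring
  rw [this] at hform
  nlinarith [le_abs_self ((#(G.interedges W W) : ℝ) - d * w ^ 2 / n)]

section Peel

variable {V : Type} [Fintype V] (Gp : SimpleGraph V) [DecidableRel Gp.Adj]
  (θ : ℝ)

lemma peel_subset (A : Finset V) : peel Gp θ A ⊆ A := filter_subset _ _

lemma peel_iterate_succ_subset (A : Finset V) (k : ℕ) :
    (peel Gp θ)^[k + 1] A ⊆ (peel Gp θ)^[k] A := by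
  rw [Function.iterate_succ_apply']
  exact peel_subset Gp θ _

lemma peel_iterate_subset (A : Finset V) (k : ℕ) : (peel Gp θ)^[k] A ⊆ A := by
  induction k with
  | zero => exact subset_rfl
  | succ k ih => exact (peel_iterate_succ_subset Gp θ A k).trans ih

variable [DecidableEq V]

lemma degree_sub_lt_card_adj_compl_of_mem_sdiff_peel {A : Finset V} {v : V}
    (hv : v ∈ A \ peel Gp θ A) :
    (Gp.degree v : ℝ) - θ < #{u ∈ Aᶜ | Gp.Adj v u} := by
  have hlt : (#{u ∈ A | Gp.Adj v u} : ℝ) < θ := by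
    simp only [peel, mem_sdiff, mem_filter, not_and, not_le] at hv
    exact hv.2 hv.1
  have hsplit : #{u ∈ A | Gp.Adj v u} + #{u ∈ Aᶜ | Gp.Adj v u} = Gp.degree v := by
    rw [← card_union_of_disjoint (disjoint_filter_filter disjoint_compl_right), ← filter_union,
      union_compl, ← Gp.card_neighborFinset_eq_degree]
    congr 1
    ext u
    simp
  have : (#{u ∈ A | Gp.Adj v u} : ℝ) + #{u ∈ Aᶜ | Gp.Adj v u} = Gp.degree v := by
    exact_mod_cast hsplit
  linarith

variable {θ} {X : Finset V} {m : ℝ} (hdeg : ∀ v ∈ X, θ + m ≤ Gp.degree v)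
include hdeg

lemma two_mul_card_sub_le_card_interedges_of_subset {k : ℕ}
    (hk : 2 * m * (#((peel Gp θ)^[k] X)ᶜ - #Xᶜ) ≤ #(Gp.interedges ((peel Gp θ)^[k] X)ᶜ
      ((peel Gp θ)^[k] X)ᶜ))
    {U : Finset V} (hU₁ : ((peel Gp θ)^[k] X)ᶜ ⊆ U) (hU₂ : U ⊆ ((peel Gp θ)^[k + 1] X)ᶜ) :
    2 * m * (#U - #Xᶜ) ≤ #(Gp.interedges U U) := by
  set C := ((peel Gp θ)^[k] X)ᶜ
  have hT : ∀ t ∈ U \ C, m ≤ #{u ∈ C | Gp.Adj t u} := by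
    intro t ht
    rw [mem_sdiff, mem_compl, not_not] at ht
    have hpeel : t ∈ (peel Gp θ)^[k] X \ peel Gp θ ((peel Gp θ)^[k] X) := by
      rw [← Function.iterate_succ_apply' (peel Gp θ)]
      exact mem_sdiff.2 ⟨ht.2, mem_compl.1 (hU₂ ht.1)⟩
    have := degree_sub_lt_card_adj_compl_of_mem_sdiff_peel Gp θ hpeel
    linarith [hdeg t (peel_iterate_subset Gp θ X k ht.2)]
  have hstep := Gp.card_interedges_add_two_mul_card_le_union disjoint_sdiff hT
  rw [union_sdiff_of_subset hU₁] at hstep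
  have hcard : (#U : ℝ) = #C + #(U \ C) := by
    rw [← Nat.cast_add, ← card_union_of_disjoint disjoint_sdiff, union_sdiff_of_subset hU₁]
  rw [hcard]
  linarith

lemma two_mul_card_sub_le_card_interedges (k : ℕ) :
    2 * m * (#((peel Gp θ)^[k] X)ᶜ - #Xᶜ) ≤
      #(Gp.interedges ((peel Gp θ)^[k] X)ᶜ ((peel Gp θ)^[k] X)ᶜ) := by
  induction k with
  | zero => simp
  | succ k ih =>
    exact two_mul_card_sub_le_card_interedges_of_subset Gp hdeg ih
      (compl_subset_compl.2 (peel_iterate_succ_subset Gp θ X k)) subset_rfl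

lemma card_compl_peel_iterate_le {N : ℕ} (hN : #Xᶜ ≤ N)
    (hsparse : ∀ U : Finset V, #U = N + 1 → (#(Gp.interedges U U) : ℝ) < 2 * m * (#U - #Xᶜ))
    (k : ℕ) : #((peel Gp θ)^[k] X)ᶜ ≤ N := by
  induction k with
  | zero => exact hN
  | succ k ih =>
    by_contra! h
    obtain ⟨U, hU₁, hU₂, hU⟩ := exists_subsuperset_card_eq
      (compl_subset_compl.2 (peel_iterate_succ_subset Gp θ X k)) (ih.trans N.le_succ) h
    exact (hsparse U hU).not_ge (two_mul_card_sub_le_card_interedges_of_subset Gp hdeg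
      (two_mul_card_sub_le_card_interedges Gp hdeg k) hU₁ hU₂)

end Peel

open Real in
lemma nine_mul_sq_mul_exp_neg_add_three_lt {x : ℝ} (hx : 310 ≤ x) :
    9 * x ^ 2 * exp (-x / 12) + 3 < x := by
  have hx0 : 0 < x := by linarith
  have hexp : x ^ 3 / 10368 ≤ exp (x / 12) := by
    have := pow_div_factorial_le_exp (x := x / 12) (by positivity) 3
    norm_num [Nat.factorial] at this
    linarith
  have : x ^ 2 * exp (-x / 12) ≤ 10368 / x := by
    rw [neg_div, exp_neg, ← div_eq_mul_inv, div_le_div_iff₀ (exp_pos _) hx0]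
    nlinarith
  have : 10368 / x ≤ 10368 / 310 := div_le_div_of_nonneg_left (by norm_num) (by norm_num) hx
  linarith

open Real in
lemma card_interedges_lt_of_specBound {V : Type} [Fintype V] (G : SimpleGraph V)
    [DecidableRel G.Adj] {d s : ℕ} {lam m : ℝ} (hreg : G.IsRegularOfDegree d)
    (hspec : specBound G lam) (hd : 310 ^ 2 ≤ d) (hlam : √d ≤ lam) (hm : lam ≤ m)
    (hs : s ≤ exp (-lam / 12) * Fintype.card V) {U : Finset V} (hU : #U = 3 * s + 1) :
    (#(G.interedges U U) : ℝ) < 2 * m * (#U - s) := by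
  set n : ℝ := (Fintype.card V : ℝ)
  obtain ⟨v⟩ : Nonempty V := by
    rw [← Finset.univ_nonempty_iff]
    exact (card_pos.1 (by omega : 0 < #U)).mono (subset_univ U)
  have hdn : (d : ℝ) < n := by
    have := G.degree_lt_card_verts v
    rw [hreg v] at this
    simp only [n]
    exact_mod_cast this
  have hd0 : (0 : ℝ) ≤ d := by positivity
  have hn : 0 < n := hd0.trans_lt hdn
  have hlam310 : 310 ≤ lam := by
    refine le_trans ?_ hlam
    rw [le_sqrt (by norm_num) hd0]
    exact_mod_cast hd
  have hdlam : (d : ℝ) ≤ lam ^ 2 := by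
    rw [← sq_sqrt hd0]
    exact pow_le_pow_left₀ (sqrt_nonneg _) hlam 2
  have hu : (#U : ℝ) = 3 * s + 1 := by exact_mod_cast hU
  have hmix := G.card_interedges_self_le_of_specBound hreg (by linarith) hspec U
  have hdu : 3 * (d * #U / n) < lam := by
    have : d * #U / n ≤ 3 * d * exp (-lam / 12) + 1 := by
      rw [div_le_iff₀ hn, hu]
      nlinarith [exp_pos (-lam / 12)]
    have := nine_mul_sq_mul_exp_neg_add_three_lt hlam310
    nlinarith [exp_pos (-lam / 12)]
  have : d * #U ^ 2 / n < lam * (s + 1) := by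
    have hs0 : (0 : ℝ) ≤ s := by positivity
    calc d * #U ^ 2 / n = (d * #U / n) * #U := by ring
      _ ≤ (d * #U / n) * (3 * (s + 1)) := by gcongr; linarith
      _ < lam * (s + 1) := by nlinarith
  rw [hu] at hmix this ⊢
  nlinarith

/-- Deletion process: remove `S₀` (vertices of `G_p`-degree outside `[4pd/5, 6pd/5]`),
then iteratively remove vertices of current degree `< 3pd/5` (iterating `n` steps
reaches the stable graph `G_p^k`). If `|S₀| ≤ e^{−c√d/12}n`, then at most `2|S₀|`
vertices are removed in the iterative phase; hence `|OUT| ≤ 3e^{−c√d/12}n`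
(for `c ≥ 1`, `pd ≥ 5c√d` and `d` sufficiently large). -/
theorem stmt_14 : ∃ d0 : ℕ, ∀ (V : Type) [Fintype V] [DecidableEq V]
    (G Gp : SimpleGraph V) [DecidableRel G.Adj] [DecidableRel Gp.Adj]
    (n d : ℕ) (c p : ℝ),
    Fintype.card V = n → d0 ≤ d → 1 ≤ c → G.IsRegularOfDegree d →
    specBound G (c * Real.sqrt d) → Gp ≤ G → 5 * c * Real.sqrt d ≤ p * d →
    ∀ S0 A : Finset V,
    S0 = Finset.univ.filter (fun v =>
      ¬(4 * p * d / 5 ≤ (Gp.degree v : ℝ) ∧ (Gp.degree v : ℝ) ≤ 6 * p * d / 5)) →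
    A = (peel Gp (3 * p * d / 5))^[n] (Finset.univ \ S0) →
    (S0.card : ℝ) ≤ Real.exp (-(c * Real.sqrt d) / 12) * n →
    (Finset.univ \ S0).card - A.card ≤ 2 * S0.card ∧
      (((Finset.univ \ A).card : ℝ) ≤ 3 * Real.exp (-(c * Real.sqrt d) / 12) * n) := by
  refine ⟨310 ^ 2, fun V _ _ G Gp _ _ n d c p hn hd hc hreg hspec hle hpd S0 A hS0 hA hs => ?_⟩
  have hdeg : ∀ v ∈ univ \ S0, 3 * p * d / 5 + p * d / 5 ≤ Gp.degree v := by
    intro v hv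
    simp only [hS0, mem_sdiff, mem_univ, mem_filter, true_and, not_not] at hv
    linarith [hv.1]
  have hlam : √d ≤ c * √d := le_mul_of_one_le_left (Real.sqrt_nonneg _) hc
  have hcompl : (univ \ S0)ᶜ = S0 := by rw [← compl_eq_univ_sdiff, compl_compl]
  have hA3 : #Aᶜ ≤ 3 * #S0 := by
    rw [hA]
    refine card_compl_peel_iterate_le Gp hdeg (by rw [hcompl]; omega) (fun U hU => ?_) n
    rw [hcompl]
    rw [← hn] at hs
    exact (Nat.cast_le.2 (Gp.card_interedges_mono hle U U)).trans_lt
      (card_interedges_lt_of_specBound G hreg hspec hd hlam (by linarith) hs hU)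
  have hcardA : #A + #Aᶜ = n := hn ▸ card_add_card_compl A
  have hcardS0 : #(univ \ S0) + #S0 = n := hn ▸ card_sdiff_add_card_eq_card (subset_univ S0)
  refine ⟨by omega, ?_⟩
  rw [← compl_eq_univ_sdiff]
  calc (#Aᶜ : ℝ) ≤ 3 * #S0 := by exact_mod_cast hA3
    _ ≤ 3 * Real.exp (-(c * √d) / 12) * n := by linarith
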